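/- Let G be a k-regular graph of order n = 2k + 1, k ≥ 4, in which adjacent vertices have no common neighbour and every pair of non-adjacent vertices has at least k−3 > 0 and at most k−1 common neighbours. Then a contradiction arises; hence such a graph has n ≥ 2k + 2. -/

import Mathlib

/-!
Fix a vertex `u`, let `A = N(u)` and let `M` be the `k` vertices outside `N[u]`. Since no edge lies
in a triangle, every `v ∈ A` sends `k - 1` edges into `M`, so `k(k - 1)` edges join `A` and `M`.
Each `w ∈ M` is non-adjacent to `u`, so it has at most `k - 1` neighbours in `A`; by the count it
has exactly `k - 1`, hence exactly one neighbour `w'` in `M`. Then `w` and `w'` each see `k - 1` of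
the `k` vertices of `A`, and `2(k - 1) > k` gives them a common neighbour, a triangle.
-/

open Finset

namespace SimpleGraph

variable {V : Type*} [Fintype V] [DecidableEq V] (G : SimpleGraph V) [DecidableRel G.Adj]

theorem sum_card_neighborFinset_inter_comm (s t : Finset V) :
    ∑ v ∈ s, #(G.neighborFinset v ∩ t) = ∑ w ∈ t, #(G.neighborFinset w ∩ s) := by
  simp_rw [card_eq_sum_ones]
  exact sum_comm' fun v w ↦ by simp only [mem_inter, mem_neighborFinset, G.adj_comm v]; tauto

theorem card_neighborFinset_inter_compl_insert_of_adj {u v : V} (huv : G.Adj u v)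
    (h : Disjoint (G.neighborFinset u) (G.neighborFinset v)) :
    #(G.neighborFinset v ∩ (insert u (G.neighborFinset u))ᶜ) = G.degree v - 1 := by
  have : G.neighborFinset v ∩ (insert u (G.neighborFinset u))ᶜ = (G.neighborFinset v).erase u := by
    ext x
    have : x ∈ G.neighborFinset u → x ∉ G.neighborFinset v := fun hx ↦ Finset.disjoint_left.1 h hx
    simp only [mem_inter, mem_compl, mem_insert, mem_erase, not_or] at this ⊢
    tauto
  rw [this, card_erase_of_mem (by simpa using huv.symm), card_neighborFinset_eq_degree]

theorem card_neighborFinset_inter_add_card_inter_compl_insert {u w : V} (h : ¬ G.Adj u w) :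
    #(G.neighborFinset w ∩ G.neighborFinset u) +
      #(G.neighborFinset w ∩ (insert u (G.neighborFinset u))ᶜ) = G.degree w := by
  rw [← sdiff_eq_inter_compl, ← card_neighborFinset_eq_degree,
    ← card_inter_add_card_sdiff (G.neighborFinset w) (insert u (G.neighborFinset u)),
    inter_insert_of_notMem (by simpa [G.adj_comm] using h)]

variable {G} in
theorem IsRegularOfDegree.card_neighborFinset_inter_eq_sub_one {k : ℕ}
    (hreg : G.IsRegularOfDegree k) {u : V} (hcard : #(insert u (G.neighborFinset u))ᶜ = k)
    (hdisj : ∀ v, G.Adj u v → Disjoint (G.neighborFinset u) (G.neighborFinset v))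
    (hle : ∀ w ∈ (insert u (G.neighborFinset u))ᶜ,
      #(G.neighborFinset w ∩ G.neighborFinset u) ≤ k - 1) :
    ∀ w ∈ (insert u (G.neighborFinset u))ᶜ, #(G.neighborFinset w ∩ G.neighborFinset u) = k - 1 := by
  refine (sum_eq_sum_iff_of_le hle).1 ?_
  rw [← sum_card_neighborFinset_inter_comm, sum_const, hcard, smul_eq_mul,
    sum_congr rfl fun v hv ↦ G.card_neighborFinset_inter_compl_insert_of_adj
      ((G.mem_neighborFinset u v).1 hv) (hdisj v ((G.mem_neighborFinset u v).1 hv)),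
    sum_congr rfl fun v _ ↦ by rw [hreg.degree_eq v],
    sum_const, card_neighborFinset_eq_degree, hreg.degree_eq, smul_eq_mul]

end SimpleGraph

open SimpleGraph

theorem stmt_11 {V : Type*} [Fintype V] [DecidableEq V] (G : SimpleGraph V) [DecidableRel G.Adj]
    (k : ℕ) (hk : 4 ≤ k) (hn : Fintype.card V = 2 * k + 1)
    (hreg : G.IsRegularOfDegree k)
    (ha : ∀ x y : V, G.Adj x y → G.neighborFinset x ∩ G.neighborFinset y = ∅)
    (hna : ∀ x y : V, x ≠ y → ¬ G.Adj x y →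
      k - 3 ≤ (G.neighborFinset x ∩ G.neighborFinset y).card ∧
      (G.neighborFinset x ∩ G.neighborFinset y).card ≤ k - 1) :
    False := by
  obtain ⟨u⟩ : Nonempty V := by rw [← Fintype.card_pos_iff]; omega
  set A := G.neighborFinset u
  set M := (insert u A)ᶜ
  have mem_M {w : V} : w ∈ M ↔ w ≠ u ∧ ¬ G.Adj u w := by simp [M, A]
  have hA : #A = k := (G.card_neighborFinset_eq_degree u).trans (hreg.degree_eq u)
  have hM : #M = k := by
    rw [card_compl, card_insert_of_notMem (by simp [A]), hA, hn]; omega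
  have hMA : ∀ w ∈ M, #(G.neighborFinset w ∩ A) = k - 1 :=
    hreg.card_neighborFinset_inter_eq_sub_one hM
      (fun v huv ↦ disjoint_iff_inter_eq_empty.2 (ha u v huv))
      fun w hw ↦ inter_comm A _ ▸ (hna u w (mem_M.1 hw).1.symm (mem_M.1 hw).2).2
  obtain ⟨w₀, hw₀⟩ : M.Nonempty := by rw [← card_pos]; omega
  obtain ⟨w₁, hw₁⟩ : (G.neighborFinset w₀ ∩ M).Nonempty := by
    have : #(G.neighborFinset w₀ ∩ A) + #(G.neighborFinset w₀ ∩ M) = G.degree w₀ :=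
      G.card_neighborFinset_inter_add_card_inter_compl_insert (mem_M.1 hw₀).2
    rw [hMA w₀ hw₀, hreg.degree_eq] at this
    rw [← card_pos]; omega
  obtain ⟨hadj, hw₁M⟩ : G.Adj w₀ w₁ ∧ w₁ ∈ M := by simpa using hw₁
  obtain ⟨x, hx⟩ := inter_nonempty_of_card_lt_card_add_card
    (t := G.neighborFinset w₀ ∩ A) (u := G.neighborFinset w₁ ∩ A)
    inter_subset_right inter_subset_right
    (by rw [hA, hMA w₀ hw₀, hMA w₁ hw₁M]; omega)
  rw [inter_inter_inter_comm, ha w₀ w₁ hadj, empty_inter] at hx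
  exact notMem_empty x hx
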